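/- Let L be a complex Hilbert space, λ : L → L a bounded complex-linear operator with adjoint λ*, and Λ : L → L an anti-symmetric real-linear map. Then the real-linear map η ↦ λ(Λη) + Λ(λ*η) is anti-symmetric. Moreover, if Λ² is trace class, then (λ∘Λ + Λ∘λ*)² is trace class. -/

import Mathlib

open scoped ComplexInnerProductSpace

/-- The absolute value `|T| = sqrt (T† T)` of a bounded operator on a complex Hilbert space. -/
noncomputable def opAbs {L : Type*} [NormedAddCommGroup L] [InnerProductSpace ℂ L]
    [CompleteSpace L] (T : L →L[ℂ] L) : L →L[ℂ] L :=
  CFC.sqrt (ContinuousLinearMap.adjoint T * T)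

/-- A bounded operator `T` is trace class if `∑ᵢ ⟨eᵢ, |T| eᵢ⟩ < ∞` for some orthonormal
(Hilbert) basis. -/
def IsTraceClassOp {L : Type*} [NormedAddCommGroup L] [InnerProductSpace ℂ L]
    [CompleteSpace L] (T : L →L[ℂ] L) : Prop :=
  ∃ (ι : Type) (e : HilbertBasis ι ℂ L),
    Summable fun i => (⟪e i, opAbs T (e i)⟫).re

/-- A map `f : L → L` is trace class if it is (the coercion of) a trace class bounded
complex-linear operator. -/
def IsTraceClassFun {L : Type*} [NormedAddCommGroup L] [InnerProductSpace ℂ L]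
    [CompleteSpace L] (f : L → L) : Prop :=
  ∃ T : L →L[ℂ] L, ⇑T = f ∧ IsTraceClassOp T

/-! For anti-symmetric `Λ` one has `⟪x, -Λ (Λ x)⟫ = ‖Λ x‖²`, so `-Λ²` is a positive operator,
`|Λ²| = -Λ²`, and `Λ²` is trace class exactly when `∑ ‖Λ eᵢ‖² < ∞` for some Hilbert basis,
i.e. when `Λ` is Hilbert–Schmidt (anti-symmetric maps are bounded by the closed graph theorem).
The map `A = λΛ + Λλ*` is again anti-symmetric, and it is Hilbert–Schmidt when `Λ` is:
`∑ ‖λ Λ eᵢ‖² ≤ ‖λ‖² ∑ ‖Λ eᵢ‖²`, and `|⟪eᵢ, Λ λ* eⱼ⟫| = |⟪eⱼ, λ Λ eᵢ⟫|`, so Parseval applied to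
the double sum gives `∑ ‖Λ λ* eⱼ‖² = ∑ ‖λ Λ eᵢ‖²`. Hence `A²` is trace class. -/

namespace HilbertBasis

variable {ι 𝕜 E : Type*} [RCLike 𝕜] [NormedAddCommGroup E] [InnerProductSpace 𝕜 E]

theorem hasSum_norm_inner_sq (b : HilbertBasis ι 𝕜 E) (x : E) :
    HasSum (fun i => ‖inner 𝕜 (b i) x‖ ^ 2) (‖x‖ ^ 2) := by
  simpa [b.repr_apply_apply, b.repr.norm_map] using
    lp.hasSum_norm (p := 2) (by norm_num) (b.repr x)

theorem summable_norm_sq_iff_summable_prod (b : HilbertBasis ι 𝕜 E) (f : E → E) :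
    (Summable fun i => ‖f (b i)‖ ^ 2) ↔
      Summable fun p : ι × ι => ‖inner 𝕜 (b p.2) (f (b p.1))‖ ^ 2 := by
  rw [summable_prod_of_nonneg fun _ => sq_nonneg _]
  simp only [(b.hasSum_norm_inner_sq _).tsum_eq, (b.hasSum_norm_inner_sq _).summable,
    implies_true, true_and]

theorem summable_norm_sq_of_norm_inner_swap (b : HilbertBasis ι 𝕜 E) {f g : E → E}
    (hfg : ∀ i j, ‖inner 𝕜 (b i) (f (b j))‖ = ‖inner 𝕜 (b j) (g (b i))‖)
    (hg : Summable fun i => ‖g (b i)‖ ^ 2) :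
    Summable fun i => ‖f (b i)‖ ^ 2 := by
  rw [b.summable_norm_sq_iff_summable_prod] at hg ⊢
  simpa only [Function.comp_def, Equiv.prodComm_apply, Prod.fst_swap, Prod.snd_swap, hfg] using
    (Equiv.prodComm ι ι).summable_iff.mpr hg

end HilbertBasis

section NormSqSummable

variable {ι : Type*}

theorem Summable.norm_sq_add {E : Type*} [SeminormedAddCommGroup E] {f g : ι → E}
    (hf : Summable fun i => ‖f i‖ ^ 2) (hg : Summable fun i => ‖g i‖ ^ 2) :
    Summable fun i => ‖f i + g i‖ ^ 2 := by
  refine ((hf.add hg).mul_left 2).of_nonneg_of_le (fun _ => by positivity) fun i => ?_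
  nlinarith [norm_add_le (f i) (g i), norm_nonneg (f i + g i), sq_nonneg (‖f i‖ - ‖g i‖)]

theorem Summable.norm_sq_clm_apply {𝕜 E F : Type*} [RCLike 𝕜] [SeminormedAddCommGroup E]
    [SeminormedAddCommGroup F] [NormedSpace 𝕜 E] [NormedSpace 𝕜 F] {f : ι → E} (l : E →L[𝕜] F)
    (hf : Summable fun i => ‖f i‖ ^ 2) : Summable fun i => ‖l (f i)‖ ^ 2 := by
  refine (hf.mul_left (‖l‖ ^ 2)).of_nonneg_of_le (fun _ => by positivity) fun i => ?_
  rw [← mul_pow]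
  gcongr
  exact l.le_opNorm _

end NormSqSummable

section Antisymmetric

variable {L : Type*} [NormedAddCommGroup L] [InnerProductSpace ℂ L]

theorem opAbs_eq_neg_of_nonneg_neg [CompleteSpace L] {T : L →L[ℂ] L} (hT : 0 ≤ -T) :
    opAbs T = -T := by
  have hT_sa : IsSelfAdjoint T := by simpa using hT.isSelfAdjoint.neg
  rw [opAbs, ← ContinuousLinearMap.star_eq_adjoint, hT_sa.star_eq, ← neg_mul_neg,
    CFC.sqrt_mul_self (-T) hT]

theorem isTraceClassOp_iff_of_nonneg_neg [CompleteSpace L] {T : L →L[ℂ] L} (hT : 0 ≤ -T) :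
    IsTraceClassOp T ↔
      ∃ (ι : Type) (e : HilbertBasis ι ℂ L), Summable fun i => (⟪e i, -T (e i)⟫).re := by
  rw [IsTraceClassOp, opAbs_eq_neg_of_nonneg_neg hT]
  rfl

def LinearMap.IsAntisymmetric (Λ : L →ₗ[ℝ] L) : Prop :=
  ∀ ξ τ : L, ⟪ξ, Λ τ⟫ = -⟪τ, Λ ξ⟫

namespace LinearMap.IsAntisymmetric

variable {Λ : L →ₗ[ℝ] L}

theorem map_complex_smul (hΛ : Λ.IsAntisymmetric) (c : ℂ) (x : L) :
    Λ (c • x) = starRingEnd ℂ c • Λ x := by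
  refine ext_inner_left ℂ fun y => ?_
  rw [hΛ, inner_smul_left, hΛ, inner_smul_right]
  ring

theorem continuous [CompleteSpace L] (hΛ : Λ.IsAntisymmetric) : Continuous Λ := by
  refine Λ.continuous_of_seq_closed_graph fun u x y hu hΛu => ?_
  refine ext_inner_left ℂ fun ξ => tendsto_nhds_unique (tendsto_const_nhds.inner hΛu) ?_
  simp_rw [Function.comp_apply, hΛ ξ]
  exact (hu.inner tendsto_const_nhds).neg

noncomputable def toCLM [CompleteSpace L] (hΛ : Λ.IsAntisymmetric) : L →L⋆[ℂ] L where
  toFun := Λ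
  map_add' := Λ.map_add
  map_smul' := hΛ.map_complex_smul
  cont := hΛ.continuous

@[simp]
theorem coe_toCLM [CompleteSpace L] (hΛ : Λ.IsAntisymmetric) : ⇑hΛ.toCLM = Λ := rfl

theorem comp_add_comp_adjoint [CompleteSpace L] (hΛ : Λ.IsAntisymmetric) (l : L →L[ℂ] L) :
    ((l : L →ₗ[ℂ] L).restrictScalars ℝ ∘ₗ Λ +
      Λ ∘ₗ (ContinuousLinearMap.adjoint l : L →ₗ[ℂ] L).restrictScalars ℝ).IsAntisymmetric := by
  intro ξ τ
  simp only [LinearMap.add_apply, LinearMap.comp_apply, LinearMap.restrictScalars_apply,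
    ContinuousLinearMap.coe_coe, inner_add_right, ← ContinuousLinearMap.adjoint_inner_left,
    hΛ ξ, hΛ (ContinuousLinearMap.adjoint l ξ)]
  ring

theorem inner_neg_map_map_self (hΛ : Λ.IsAntisymmetric) (x : L) :
    ⟪x, -Λ (Λ x)⟫ = (‖Λ x‖ ^ 2 : ℝ) := by
  rw [inner_neg_right, hΛ, neg_neg, inner_self_eq_norm_sq_to_K]
  norm_cast

theorem nonneg_neg_toCLM_comp_self [CompleteSpace L] (hΛ : Λ.IsAntisymmetric) :
    0 ≤ -(hΛ.toCLM.comp hΛ.toCLM) := by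
  rw [ContinuousLinearMap.nonneg_iff_isPositive, ContinuousLinearMap.isPositive_iff_complex]
  intro x
  rw [← inner_conj_symm, _root_.neg_apply, ContinuousLinearMap.comp_apply, coe_toCLM,
    hΛ.inner_neg_map_map_self, Complex.conj_ofReal, RCLike.re_to_complex, Complex.ofReal_re]
  exact ⟨rfl, by positivity⟩

theorem isTraceClassOp_toCLM_comp_self_iff [CompleteSpace L] (hΛ : Λ.IsAntisymmetric) :
    IsTraceClassOp (hΛ.toCLM.comp hΛ.toCLM) ↔
      ∃ (ι : Type) (e : HilbertBasis ι ℂ L), Summable fun i => ‖Λ (e i)‖ ^ 2 := by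
  simp only [isTraceClassOp_iff_of_nonneg_neg hΛ.nonneg_neg_toCLM_comp_self,
    ContinuousLinearMap.comp_apply, coe_toCLM, hΛ.inner_neg_map_map_self, Complex.ofReal_re]

theorem summable_norm_sq_comp_add_comp_adjoint [CompleteSpace L] (hΛ : Λ.IsAntisymmetric)
    (l : L →L[ℂ] L) {ι : Type*} (e : HilbertBasis ι ℂ L)
    (he : Summable fun i => ‖Λ (e i)‖ ^ 2) :
    Summable fun i => ‖l (Λ (e i)) + Λ (ContinuousLinearMap.adjoint l (e i))‖ ^ 2 := by
  have hlΛ : Summable fun i => ‖l (Λ (e i))‖ ^ 2 := he.norm_sq_clm_apply l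
  have hΛl : Summable fun i => ‖Λ (ContinuousLinearMap.adjoint l (e i))‖ ^ 2 := by
    refine e.summable_norm_sq_of_norm_inner_swap
      (f := fun x => Λ (ContinuousLinearMap.adjoint l x)) (g := fun x => l (Λ x))
      (fun i j => ?_) hlΛ
    rw [hΛ, norm_neg, ContinuousLinearMap.adjoint_inner_left]
  exact hlΛ.norm_sq_add hΛl

end LinearMap.IsAntisymmetric

end Antisymmetric

/-- If `λ` is a bounded complex-linear operator and `Λ` is anti-symmetric,
then `λ∘Λ + Λ∘λ*` is anti-symmetric; and if `Λ²` is trace class then `(λ∘Λ + Λ∘λ*)²`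
is trace class. -/
theorem antisymmetric_mixed_bracket
    {L : Type*} [NormedAddCommGroup L] [InnerProductSpace ℂ L] [CompleteSpace L]
    (l : L →L[ℂ] L) (Λ : L →ₗ[ℝ] L)
    (hΛ : ∀ ξ τ : L, ⟪ξ, Λ τ⟫ = -⟪τ, Λ ξ⟫) :
    (∀ ξ τ : L, ⟪ξ, l (Λ τ) + Λ (ContinuousLinearMap.adjoint l τ)⟫ =
        -⟪τ, l (Λ ξ) + Λ (ContinuousLinearMap.adjoint l ξ)⟫) ∧
    (IsTraceClassFun (fun η => Λ (Λ η)) →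
      IsTraceClassFun (fun η =>
        l (Λ (l (Λ η) + Λ (ContinuousLinearMap.adjoint l η))) +
          Λ (ContinuousLinearMap.adjoint l
            (l (Λ η) + Λ (ContinuousLinearMap.adjoint l η))))) := by
  have hΛ' : Λ.IsAntisymmetric := hΛ
  have hA := hΛ'.comp_add_comp_adjoint l
  refine ⟨hA, ?_⟩
  rintro ⟨S, hS, hS_tc⟩
  obtain rfl : S = hΛ'.toCLM.comp hΛ'.toCLM := ContinuousLinearMap.ext (congrFun hS)
  obtain ⟨ι, e, he⟩ := hΛ'.isTraceClassOp_toCLM_comp_self_iff.mp hS_tc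
  exact ⟨hA.toCLM.comp hA.toCLM, rfl, hA.isTraceClassOp_toCLM_comp_self_iff.mpr
    ⟨ι, e, hΛ'.summable_norm_sq_comp_add_comp_adjoint l e he⟩⟩
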